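/- arXiv:2310.11630 — 3 statements merged into one kernel-verified Lean document; each statement's English description precedes it below -/
import Mathlib

section
/- Proposition 1, Part 1 (compositeness of the null of no mediation effect for a binary outcome). Let g(x) = eˣ/(1+eˣ) be the logistic function, let κ : ℝ → Measure(ℝ) be a family of Borel probability measures on ℝ such that (i) for every t ∈ ℝ the map ν ↦ κ(ν)((t, ∞)) is monotone nondecreasing, and (ii) κ is injective (distinct parameters give distinct measures). Fix real numbers μ₁, μ₂ and s ≠ s*. For real parameters α, β define P_s(α, β) = ∫ g(β m + μ₁) dκ(α s + μ₂)(m) and P_{s*}(α, β) = ∫ g(β m + μ₁) dκ(α s* + μ₂)(m). Then P_s(α, β) = P_{s*}(α, β) if and only if α = 0 or β = 0. -/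
/-!
For `β > 0` the map `h m = g (β m + μ₁)` is a continuous, strictly increasing, positive
injection, so by the intermediate value theorem its upper level sets are half-lines. Hence
monotonicity of the tails of `κ ν` in `ν` makes the push-forwards of `κ ν₁` and `κ ν₂`
(`ν₁ ≤ ν₂`) along `h` stochastically ordered, and by the layer-cake formula their means are
the integrals of their tail functions. Equal means thus force the tails to agree almost
everywhere, hence (by right continuity of distribution functions) everywhere, so the
push-forwards coincide; since `h` is a measurable embedding and `κ` is injective, `α s = α s*`.
The case `β < 0` reduces to `β > 0` through `g (-x) = 1 - g x`.
-/

open MeasureTheory ProbabilityTheory Set Real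

theorem eqOn_Ici_of_ae_eq_of_continuousWithinAt_Ici {f g : ℝ → ℝ} {a : ℝ}
    (hf : ∀ x, ContinuousWithinAt f (Ici x) x) (hg : ∀ x, ContinuousWithinAt g (Ici x) x)
    (hfg : f =ᵐ[volume.restrict (Ioi a)] g) : EqOn f g (Ici a) := by
  intro x hx
  by_contra hne
  have hdiff : ContinuousWithinAt (f - g) (Ioi x) x :=
    ((hf x).sub (hg x)).mono Ioi_subset_Ici_self
  obtain ⟨b, hxb, hsub⟩ := mem_nhdsGT_iff_exists_Ioo_subset.1
    (hdiff.eventually_ne (sub_ne_zero.2 hne))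
  have hbad : volume {y | ¬(y ∈ Ioi a → f y = g y)} = 0 :=
    (ae_restrict_iff' measurableSet_Ioi).1 hfg
  have hnull : volume (Ioo x b) = 0 := by
    refine measure_mono_null (fun y hy => ?_) hbad
    exact fun hyeq => hsub hy (sub_eq_zero.2 (hyeq (hx.trans_lt hy.1)))
  simp only [Real.volume_Ioo, ENNReal.ofReal_eq_zero, tsub_nonpos] at hnull
  exact hnull.not_gt hxb

theorem ofReal_integral_eq_lintegral_measure_Ioi {μ : Measure ℝ} (h0 : ∀ᵐ x ∂μ, 0 ≤ x)
    (hint : Integrable id μ) :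
    ENNReal.ofReal (∫ x, x ∂μ) = ∫⁻ t in Ioi 0, μ (Ioi t) := by
  rw [ofReal_integral_eq_lintegral_ofReal (f := fun x => x) hint h0]
  exact lintegral_eq_lintegral_meas_lt μ h0 aemeasurable_id

theorem MeasureTheory.Measure.eq_of_measure_Ioi_le_of_integral_eq {μ ν : Measure ℝ}
    [IsProbabilityMeasure μ] [IsProbabilityMeasure ν] (hμ0 : ∀ᵐ x ∂μ, 0 ≤ x) (hν0 : ∀ᵐ x ∂ν, 0 ≤ x)
    (hμ : Integrable id μ) (hν : Integrable id ν) (hle : ∀ t, μ (Ioi t) ≤ ν (Ioi t))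
    (heq : ∫ x, x ∂μ = ∫ x, x ∂ν) : μ = ν := by
  have htail : (fun t => μ (Ioi t)) =ᵐ[volume.restrict (Ioi 0)] fun t => ν (Ioi t) := by
    refine ae_eq_of_ae_le_of_lintegral_le (ae_of_all _ hle) ?_
      (Antitone.measurable fun _ _ h => measure_mono (Ioi_subset_Ioi h)).aemeasurable ?_
    · rw [← ofReal_integral_eq_lintegral_measure_Ioi hμ0 hμ]
      exact ENNReal.ofReal_ne_top
    · rw [← ofReal_integral_eq_lintegral_measure_Ioi hμ0 hμ,
        ← ofReal_integral_eq_lintegral_measure_Ioi hν0 hν, heq]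
  have hcdf : EqOn (cdf μ) (cdf ν) (Ici 0) := by
    refine eqOn_Ici_of_ae_eq_of_continuousWithinAt_Ici (cdf μ).right_continuous
      (cdf ν).right_continuous ?_
    filter_upwards [htail] with t ht
    rw [cdf_eq_real, cdf_eq_real, measureReal_def, measureReal_def, ← compl_Ioi,
      prob_compl_eq_one_sub measurableSet_Ioi, prob_compl_eq_one_sub measurableSet_Ioi, ht]
  have hneg : ∀ ρ : Measure ℝ, (∀ᵐ x ∂ρ, 0 ≤ x) → ∀ t < 0, ρ (Iic t) = 0 :=
    fun ρ h0 t ht =>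
      measure_mono_null (t := {x | ¬0 ≤ x}) (fun x (hx : x ≤ t) => (hx.trans_lt ht).not_ge) h0
  refine Measure.eq_of_cdf μ ν (StieltjesFunction.ext fun t => ?_)
  rcases le_or_gt 0 t with ht | ht
  · exact hcdf ht
  · rw [cdf_eq_real, cdf_eq_real, measureReal_def, measureReal_def, hneg μ hμ0 t ht,
      hneg ν hν0 t ht]

theorem StrictMono.measure_preimage_Ioi_le {f : ℝ → ℝ} (hf : StrictMono f) (hfc : Continuous f)
    {μ ν : Measure ℝ} [IsProbabilityMeasure μ] [IsProbabilityMeasure ν]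
    (hle : ∀ t, μ (Ioi t) ≤ ν (Ioi t)) (t : ℝ) : μ (f ⁻¹' Ioi t) ≤ ν (f ⁻¹' Ioi t) := by
  by_cases hbelow : ∃ a, f a ≤ t
  · by_cases habove : ∃ b, t < f b
    · obtain ⟨a, ha⟩ := hbelow
      obtain ⟨b, hb⟩ := habove
      obtain ⟨c, rfl⟩ := intermediate_value_univ a b hfc ⟨ha, hb.le⟩
      have hpre : f ⁻¹' Ioi (f c) = Ioi c := ext fun x => hf.lt_iff_lt
      rw [hpre]
      exact hle c
    · have hpre : f ⁻¹' Ioi t = ∅ := by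
        simp only [not_exists, not_lt] at habove
        exact eq_empty_of_forall_notMem fun x hx => (habove x).not_gt hx
      simp [hpre]
  · have hpre : f ⁻¹' Ioi t = univ := by
      simp only [not_exists, not_le] at hbelow
      exact eq_univ_of_forall hbelow
    simp [hpre]

theorem StrictMono.measure_eq_of_measure_Ioi_le_of_integral_eq {f : ℝ → ℝ} (hf : StrictMono f)
    (hfc : Continuous f) (hf0 : ∀ x, 0 ≤ f x) {μ ν : Measure ℝ} [IsProbabilityMeasure μ]
    [IsProbabilityMeasure ν] (hμ : Integrable f μ) (hν : Integrable f ν)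
    (hle : ∀ t, μ (Ioi t) ≤ ν (Ioi t)) (heq : ∫ x, f x ∂μ = ∫ x, f x ∂ν) : μ = ν := by
  have hemb := hfc.measurableEmbedding hf.injective
  have : IsProbabilityMeasure (μ.map f) := Measure.isProbabilityMeasure_map hfc.aemeasurable
  have : IsProbabilityMeasure (ν.map f) := Measure.isProbabilityMeasure_map hfc.aemeasurable
  refine hemb.map_injective (Measure.eq_of_measure_Ioi_le_of_integral_eq ?_ ?_ ?_ ?_ ?_ ?_)
  · exact hemb.ae_map_iff.2 (ae_of_all _ hf0)
  · exact hemb.ae_map_iff.2 (ae_of_all _ hf0)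
  · exact hemb.integrable_map_iff.2 hμ
  · exact hemb.integrable_map_iff.2 hν
  · intro t
    rw [hemb.map_apply, hemb.map_apply]
    exact hf.measure_preimage_Ioi_le hfc hle t
  · rwa [hemb.integral_map, hemb.integral_map]

lemma sigmoid_eq_exp_div (x : ℝ) : sigmoid x = exp x / (1 + exp x) := by
  rw [sigmoid_def, exp_neg]
  field_simp
  ring

lemma integrable_sigmoid_comp {μ : Measure ℝ} [IsFiniteMeasure μ] {f : ℝ → ℝ}
    (hf : Measurable f) : Integrable (fun x => sigmoid (f x)) μ :=
  Integrable.of_bound (continuous_sigmoid.measurable.comp hf).aestronglyMeasurable 1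
    (ae_of_all _ fun x => by
      rw [Real.norm_of_nonneg (sigmoid_nonneg _)]; exact sigmoid_le_one _)

lemma integral_sigmoid_neg (μ : Measure ℝ) [IsProbabilityMeasure μ] (β c : ℝ) :
    ∫ m, sigmoid (β * m + c) ∂μ = 1 - ∫ m, sigmoid (-β * m + -c) ∂μ := by
  have hneg : ∀ m, sigmoid (β * m + c) = 1 - sigmoid (-β * m + -c) := fun m => by
    rw [show -β * m + -c = -(β * m + c) by ring, sigmoid_neg, sub_sub_cancel]
  simp_rw [hneg]
  rw [integral_sub (integrable_const 1) (integrable_sigmoid_comp (by fun_prop))]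
  simp

theorem MeasureTheory.Measure.eq_of_measure_Ioi_le_of_integral_sigmoid_eq {μ ν : Measure ℝ}
    [IsProbabilityMeasure μ] [IsProbabilityMeasure ν] (hle : ∀ t, μ (Ioi t) ≤ ν (Ioi t))
    {β : ℝ} (hβ : β ≠ 0) (c : ℝ)
    (heq : ∫ m, sigmoid (β * m + c) ∂μ = ∫ m, sigmoid (β * m + c) ∂ν) : μ = ν := by
  wlog hpos : 0 < β generalizing β c
  · refine this (neg_ne_zero.2 hβ) (-c) ?_ (neg_pos.2 ((not_lt.1 hpos).lt_of_ne hβ))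
    rw [integral_sigmoid_neg μ β c, integral_sigmoid_neg ν β c] at heq
    linarith
  have hmono : StrictMono fun m => sigmoid (β * m + c) :=
    sigmoid_strictMono.comp fun _ _ hxy => add_lt_add_left (mul_lt_mul_of_pos_left hxy hpos) c
  exact hmono.measure_eq_of_measure_Ioi_le_of_integral_eq (by fun_prop)
    (fun _ => sigmoid_nonneg _) (integrable_sigmoid_comp (by fun_prop))
    (integrable_sigmoid_comp (by fun_prop)) hle heq

/-- Proposition 1, Part 1: compositeness of the null of no mediation effect for a binary
outcome.  `g` is the logistic function, `κ` is a family of Borel probability measures on ℝ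
with monotone nondecreasing tail probabilities and injective parametrization. -/
theorem prop1_part1_composite_null
    (g : ℝ → ℝ) (hg : g = fun x => Real.exp x / (1 + Real.exp x))
    (κ : ℝ → Measure ℝ) (hprob : ∀ ν, IsProbabilityMeasure (κ ν))
    (hmono : ∀ t : ℝ, Monotone fun ν => κ ν (Set.Ioi t))
    (hinj : Function.Injective κ)
    (μ₁ μ₂ s s' : ℝ) (hss : s ≠ s') (α β : ℝ) :
    (∫ m, g (β * m + μ₁) ∂(κ (α * s + μ₂))) = (∫ m, g (β * m + μ₁) ∂(κ (α * s' + μ₂))) ↔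
      α = 0 ∨ β = 0 := by
  obtain rfl : g = sigmoid := hg.trans (funext fun x => (sigmoid_eq_exp_div x).symm)
  constructor
  · intro heq
    by_contra! hαβ
    have hκ : κ (α * s + μ₂) = κ (α * s' + μ₂) := by
      rcases le_total (α * s + μ₂) (α * s' + μ₂) with hν | hν
      · exact Measure.eq_of_measure_Ioi_le_of_integral_sigmoid_eq (fun t => hmono t hν)
          hαβ.2 μ₁ heq
      · exact (Measure.eq_of_measure_Ioi_le_of_integral_sigmoid_eq (fun t => hmono t hν)
          hαβ.2 μ₁ heq.symm).symm
    exact hss (mul_left_cancel₀ hαβ.1 (add_right_cancel (hinj hκ)))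
  · rintro (rfl | rfl) <;> simp
end

section
/- Proposition 1, Part 2 (zero-gradient phenomenon of the log odds-ratio mediation effect, logistic outcome and logistic binary mediator). Let g(x) = eˣ/(1+eˣ) and logit(y) = log(y/(1−y)). Fix reals μ₁, μ₂ and s ≠ s*. For real parameters α, β set d_β(β) = g(β + μ₁) − g(μ₁), P(α, β; r) = d_β(β)·g(α r + μ₂) + g(μ₁) for r ∈ {s, s*} (one checks 0 < P(α, β; r) < 1), and NIE(α, β) = logit(P(α, β; s)) − logit(P(α, β; s*)). Then: (i) for every α the derivative of a ↦ NIE(a, 0) at a = α is 0, and for every β the derivative of b ↦ NIE(0, b) at b = β is 0; (ii) for every β ≠ 0 the derivative of a ↦ NIE(a, β) at a = 0 is nonzero; (iii) for every α ≠ 0 the derivative of b ↦ NIE(α, b) at b = 0 is nonzero. -/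
/-!
Along either axis of the null set the natural indirect effect vanishes identically (for `β = 0`
the factor `d_β` is zero; for `α = 0` the two probabilities coincide), so both partial derivatives
along it are zero. Transversally, at a null point both probabilities `P_s` and `P_{s*}` agree, so
the derivative of `logit P_s - logit P_{s*}` is `(P_s' - P_{s*}') / (P (1 - P))`. In `α` the
difference `P_s' - P_{s*}'` is a nonzero multiple of `s - s*`; in `β` it is `g'(μ₁)` times
`g(α s + μ₂) - g(α s* + μ₂)`, nonzero by strict monotonicity of the logistic function.
-/

open Real

namespace Real

noncomputable def logit (y : ℝ) : ℝ := log (y / (1 - y))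

lemma exp_div_one_add_exp (x : ℝ) : exp x / (1 + exp x) = sigmoid x := by
  rw [sigmoid_def, exp_neg]
  field_simp
  ring

end Real

theorem HasDerivAt.logit {u : ℝ → ℝ} {u' x : ℝ} (hu : HasDerivAt u u' x) (h0 : 0 < u x)
    (h1 : u x < 1) : HasDerivAt (fun y => Real.logit (u y)) (u' / (u x * (1 - u x))) x := by
  have hsub : 1 - u x ≠ 0 := by linarith
  have hodds : HasDerivAt (fun y => u y / (1 - u y))
      ((u' * (1 - u x) - u x * (0 - u')) / (1 - u x) ^ 2) x :=
    hu.div ((hasDerivAt_const x 1).sub hu) hsub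
  unfold Real.logit
  convert hodds.log (div_ne_zero h0.ne' hsub) using 1
  field_simp
  ring

theorem HasDerivAt.logit_sub_logit {u v : ℝ → ℝ} {u' v' x : ℝ} (hu : HasDerivAt u u' x)
    (hv : HasDerivAt v v' x) (huv : u x = v x) (h0 : 0 < u x) (h1 : u x < 1) :
    HasDerivAt (fun y => Real.logit (u y) - Real.logit (v y)) ((u' - v') / (u x * (1 - u x))) x := by
  have h := (hu.logit h0 h1).sub (hv.logit (huv ▸ h0) (huv ▸ h1))
  rwa [← huv, div_sub_div_same] at h

/-- `P(α, β; r)`, the probability `P{Y(r, M(r)) = 1 | X = x}` of the logistic–logistic model. -/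
noncomputable def mixProb (μ₁ μ₂ α β r : ℝ) : ℝ :=
  (sigmoid (β + μ₁) - sigmoid μ₁) * sigmoid (α * r + μ₂) + sigmoid μ₁

noncomputable def logOddsNIE (μ₁ μ₂ s s' α β : ℝ) : ℝ :=
  logit (mixProb μ₁ μ₂ α β s) - logit (mixProb μ₁ μ₂ α β s')

section

variable (μ₁ μ₂ : ℝ)

/-- `P` is a convex combination of `g(β + μ₁)` and `g(μ₁)`, both in `(0, 1)`. -/
lemma mixProb_mem_Ioo (α β r : ℝ) : mixProb μ₁ μ₂ α β r ∈ Set.Ioo 0 1 := by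
  have hw₀ := sigmoid_pos (α * r + μ₂)
  have hw₁ := sigmoid_lt_one (α * r + μ₂)
  have hp₀ := sigmoid_pos (β + μ₁)
  have hp₁ := sigmoid_lt_one (β + μ₁)
  have hq₀ := sigmoid_pos μ₁
  have hq₁ := sigmoid_lt_one μ₁
  constructor <;> unfold mixProb <;> nlinarith [mul_pos hw₀ hp₀, mul_pos hw₀ (sub_pos.2 hp₁)]

lemma hasDerivAt_mixProb_left (β r : ℝ) :
    HasDerivAt (fun a => mixProb μ₁ μ₂ a β r)
      ((sigmoid (β + μ₁) - sigmoid μ₁) * (sigmoid μ₂ * (1 - sigmoid μ₂) * r)) 0 := by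
  have hlin : HasDerivAt (fun a : ℝ => a * r + μ₂) r 0 := (hasDerivAt_mul_const r).add_const μ₂
  have hσ := (hasDerivAt_sigmoid (0 * r + μ₂)).comp 0 hlin
  rw [zero_mul, zero_add] at hσ
  exact (hσ.const_mul _).add_const _

lemma hasDerivAt_mixProb_right (α r : ℝ) :
    HasDerivAt (fun b => mixProb μ₁ μ₂ α b r)
      (sigmoid μ₁ * (1 - sigmoid μ₁) * sigmoid (α * r + μ₂)) 0 := by
  have hσ := (hasDerivAt_sigmoid (0 + μ₁)).comp 0 ((hasDerivAt_id (0 : ℝ)).add_const μ₁)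
  rw [zero_add, mul_one] at hσ
  exact ((hσ.sub_const _).mul_const _).add_const _

variable (s s' : ℝ)

lemma logOddsNIE_zero_right (α : ℝ) : logOddsNIE μ₁ μ₂ s s' α 0 = 0 := by
  simp [logOddsNIE, mixProb]

lemma logOddsNIE_zero_left (β : ℝ) : logOddsNIE μ₁ μ₂ s s' 0 β = 0 := by
  simp [logOddsNIE, mixProb]

lemma hasDerivAt_logOddsNIE_left (β : ℝ) :
    HasDerivAt (fun a => logOddsNIE μ₁ μ₂ s s' a β)
      ((sigmoid (β + μ₁) - sigmoid μ₁) * (sigmoid μ₂ * (1 - sigmoid μ₂)) * (s - s') /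
        (mixProb μ₁ μ₂ 0 β s * (1 - mixProb μ₁ μ₂ 0 β s))) 0 := by
  have hP := mixProb_mem_Ioo μ₁ μ₂ 0 β s
  unfold logOddsNIE
  convert (hasDerivAt_mixProb_left μ₁ μ₂ β s).logit_sub_logit
    (hasDerivAt_mixProb_left μ₁ μ₂ β s') (by simp [mixProb]) hP.1 hP.2 using 2
  ring

lemma hasDerivAt_logOddsNIE_right (α : ℝ) :
    HasDerivAt (fun b => logOddsNIE μ₁ μ₂ s s' α b)
      (sigmoid (α * s + μ₂) - sigmoid (α * s' + μ₂)) 0 := by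
  have hσ' : sigmoid μ₁ * (1 - sigmoid μ₁) ≠ 0 :=
    (mul_pos (sigmoid_pos μ₁) (sub_pos.2 (sigmoid_lt_one μ₁))).ne'
  have hP := mixProb_mem_Ioo μ₁ μ₂ α 0 s
  have hval (r : ℝ) : mixProb μ₁ μ₂ α 0 r = sigmoid μ₁ := by simp [mixProb]
  unfold logOddsNIE
  convert (hasDerivAt_mixProb_right μ₁ μ₂ α s).logit_sub_logit
    (hasDerivAt_mixProb_right μ₁ μ₂ α s') (by rw [hval, hval]) hP.1 hP.2 using 1
  rw [hval, ← mul_sub, mul_div_cancel_left₀ _ hσ']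

end

/-- Proposition 1, Part 2: zero-gradient phenomenon of the log odds-ratio mediation effect,
logistic outcome and logistic binary mediator. -/
theorem prop1_part2_zero_gradient
    (μ₁ μ₂ s s' : ℝ) (hss : s ≠ s')
    (g logit : ℝ → ℝ)
    (hg : g = fun x => Real.exp x / (1 + Real.exp x))
    (hlogit : logit = fun y => Real.log (y / (1 - y)))
    (dβ : ℝ → ℝ) (hdβ : dβ = fun β => g (β + μ₁) - g μ₁)
    (Pr : ℝ → ℝ → ℝ → ℝ)
    (hPr : Pr = fun α β r => dβ β * g (α * r + μ₂) + g μ₁)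
    (NIE : ℝ → ℝ → ℝ)
    (hNIE : NIE = fun α β => logit (Pr α β s) - logit (Pr α β s')) :
    (∀ α : ℝ, deriv (fun a => NIE a 0) α = 0) ∧
    (∀ β : ℝ, deriv (fun b => NIE 0 b) β = 0) ∧
    (∀ β : ℝ, β ≠ 0 → deriv (fun a => NIE a β) 0 ≠ 0) ∧
    (∀ α : ℝ, α ≠ 0 → deriv (fun b => NIE α b) 0 ≠ 0) := by
  have hg' : g = sigmoid := hg.trans (funext exp_div_one_add_exp)
  have hNIE' : NIE = logOddsNIE μ₁ μ₂ s s' := by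
    subst hNIE hPr hdβ hlogit hg'
    rfl
  have hσμ₂ : 0 < sigmoid μ₂ * (1 - sigmoid μ₂) :=
    mul_pos (sigmoid_pos μ₂) (sub_pos.2 (sigmoid_lt_one μ₂))
  subst hNIE'
  refine ⟨fun α => ?_, fun β => ?_, fun β hβ => ?_, fun α hα => ?_⟩
  · simp [logOddsNIE_zero_right]
  · simp [logOddsNIE_zero_left]
  · have hP := mixProb_mem_Ioo μ₁ μ₂ 0 β s
    rw [(hasDerivAt_logOddsNIE_left μ₁ μ₂ s s' β).deriv]
    refine div_ne_zero (mul_ne_zero (mul_ne_zero ?_ hσμ₂.ne') (sub_ne_zero.2 hss))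
      (mul_pos hP.1 (sub_pos.2 hP.2)).ne'
    simpa [sub_eq_zero] using hβ
  · rw [(hasDerivAt_logOddsNIE_right μ₁ μ₂ s s' α).deriv]
    simpa [sub_eq_zero, hα] using hss
end

section
/- Almost-sure consistency of the OLS error-variance ratio (Lemma S.3, first part). Let (X_i, S_i, e_i)_{i≥1} be an i.i.d. sequence of ℝᵖ×ℝ×ℝ-valued random vectors with generic copy (X, S, e). Fix α ∈ ℝ, a ∈ ℝᵖ and define M_i := α S_i + ⟨X_i, a⟩ + e_i. Assume: E[X_j e] = 0 for all j and E[S e] = 0; the variables e, S and all coordinates of X are square integrable; E[XXᵀ] is invertible; and, writing Z̃ := (S, Xᵀ)ᵀ ∈ ℝ^{1+p}, the Gram matrix E[Z̃Z̃ᵀ] is invertible. Let Q_S := E[XXᵀ]⁻¹E[XS] and S_⊥ := S − ⟨X, Q_S⟩, and note E[S_⊥²] > 0. For each n let (α̂_n, â_n) := (Z̃_nᵀZ̃_n)⁻¹Z̃_nᵀM_n be the OLS coefficients from the first n observations (Z̃_n the n×(1+p) design matrix with rows (S_i, X_iᵀ)), let ε̂_{n,i} := M_i − α̂_n S_i − ⟨X_i,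 â_n⟩, let Q̂_{S,n} := (n⁻¹Σ_{i≤n}X_iX_iᵀ)⁻¹(n⁻¹Σ_{i≤n}S_iX_i) and Ŝ_{⊥,n,i} := S_i − ⟨X_i, Q̂_{S,n}⟩, and define σ̂²_n := (Σ_{i≤n} ε̂_{n,i}²) / (Σ_{i≤n} Ŝ_{⊥,n,i}²). Then, almost surely, σ̂²_n → E[e²] / E[S_⊥²] as n → ∞. -/
open MeasureTheory ProbabilityTheory Matrix Filter Finset
open scoped Topology

/-!
Every estimator here is a continuous function of the empirical second-moment matrix
`Ĝₙ = n⁻¹ ∑_{i<n} wᵢ wᵢᵀ` of `w = (M, S, X)`. For the second-moment matrix `H` of a vector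
`(y, z)`, the mean square of `y - z ⬝ β` is the quadratic form of `H` at `(1, -β)`, and the
regression coefficient of `y` on `z` is `H_zz⁻¹ H_zy`; OLS evaluates this coefficient at `Ĝₙ`.
By the strong law `Ĝₙ → E[w wᵀ]` almost surely, and matrix inversion is continuous at the
invertible `E[Z̃ Z̃ᵀ]`, so both residual mean squares converge to their population counterparts.
Orthogonality of `e` and `Z̃` makes the population coefficient of `M` on `Z̃` equal to `(α, a)`,
so the numerator tends to `E[e²]`; the denominator tends to `E[S_⊥²]`, which is positive because
`E[Z̃ Z̃ᵀ]` is positive semidefinite and invertible, hence positive definite.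
-/

namespace Matrix

theorem inv_smul₀ {K ι : Type*} [Field K] [Fintype ι] [DecidableEq ι] {k : K} (hk : k ≠ 0)
    (A : Matrix ι ι K) : (k • A)⁻¹ = k⁻¹ • A⁻¹ := by
  by_cases hA : IsUnit A.det
  · exact inv_smul' A (Units.mk0 k hk) hA
  · have hkA : ¬IsUnit (k • A).det := by
      simpa [det_smul, hk, isUnit_iff_ne_zero] using hA
    rw [nonsing_inv_apply_not_isUnit _ hA, nonsing_inv_apply_not_isUnit _ hkA, smul_zero]

end Matrix

noncomputable section

variable {ι : Type*}

section SampleMoments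

def sampleSecondMoment (w : ℕ → ι → ℝ) (n : ℕ) : Matrix ι ι ℝ :=
  of fun j k => (n : ℝ)⁻¹ * ∑ i ∈ range n, w i j * w i k

def designMatrix (w : ℕ → ι → ℝ) (n : ℕ) : Matrix (Fin n) ι ℝ :=
  of fun i j => w i j

theorem sampleSecondMoment_eq_sum (w : ℕ → ι → ℝ) (n : ℕ) :
    sampleSecondMoment w n = (n : ℝ)⁻¹ • ∑ i ∈ range n, vecMulVec (w i) (w i) := by
  ext j k
  simp [sampleSecondMoment, Matrix.sum_apply, vecMulVec_apply]

theorem transpose_designMatrix_mul_self (w : ℕ → ι → ℝ) {n : ℕ} (hn : n ≠ 0) :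
    (designMatrix w n)ᵀ * designMatrix w n = (n : ℝ) • sampleSecondMoment w n := by
  ext j k
  simp [designMatrix, sampleSecondMoment, mul_apply,
    Fin.sum_univ_eq_sum_range (fun i => w i j * w i k), hn]

theorem transpose_designMatrix_mulVec (w : ℕ → ι → ℝ) (y : ℕ → ℝ) (n : ℕ) :
    (designMatrix w n)ᵀ *ᵥ (fun i : Fin n => y i) = fun j => ∑ i ∈ range n, y i * w i j := by
  ext j
  simp [designMatrix, mulVec, dotProduct, Fin.sum_univ_eq_sum_range (fun i => w i j * y i),
    mul_comm]

theorem dotProduct_sampleSecondMoment_mulVec [Fintype ι] (w : ℕ → ι → ℝ) (n : ℕ)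
    (u : ι → ℝ) :
    u ⬝ᵥ sampleSecondMoment w n *ᵥ u = (n : ℝ)⁻¹ * ∑ i ∈ range n, (w i ⬝ᵥ u) ^ 2 := by
  rw [sampleSecondMoment_eq_sum, smul_mulVec, dotProduct_smul, sum_mulVec, dotProduct_sum]
  simp [vecMulVec_mulVec, dotProduct_comm u, sq]

end SampleMoments

section Regression

variable {q : ℕ}

def regressionCoef (H : Matrix (Fin (q + 1)) (Fin (q + 1)) ℝ) : Fin q → ℝ :=
  (H.submatrix Fin.succ Fin.succ)⁻¹ *ᵥ fun j => H 0 j.succ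

def meanSqResidual (H : Matrix (Fin (q + 1)) (Fin (q + 1)) ℝ) (β : Fin q → ℝ) : ℝ :=
  vecCons 1 (-β) ⬝ᵥ H *ᵥ vecCons 1 (-β)

def olsCoef (z : ℕ → Fin q → ℝ) (y : ℕ → ℝ) (n : ℕ) : Fin q → ℝ :=
  regressionCoef (sampleSecondMoment (fun i => vecCons (y i) (z i)) n)

def olsRss (z : ℕ → Fin q → ℝ) (y : ℕ → ℝ) (n : ℕ) : ℝ :=
  ∑ i ∈ range n, (y i - z i ⬝ᵥ olsCoef z y n) ^ 2

theorem normalEquations_solution_eq_olsCoef (z : ℕ → Fin q → ℝ) (y : ℕ → ℝ) {n : ℕ} (hn : n ≠ 0) :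
    ((designMatrix z n)ᵀ * designMatrix z n)⁻¹ *ᵥ ((designMatrix z n)ᵀ *ᵥ fun i : Fin n => y i)
      = olsCoef z y n := by
  rw [transpose_designMatrix_mul_self z hn, transpose_designMatrix_mulVec,
    inv_smul₀ (Nat.cast_ne_zero.2 hn), smul_mulVec, ← mulVec_smul]
  rfl

theorem meanSqResidual_sampleSecondMoment (z : ℕ → Fin q → ℝ) (y : ℕ → ℝ) (n : ℕ)
    (β : Fin q → ℝ) :
    meanSqResidual (sampleSecondMoment (fun i => vecCons (y i) (z i)) n) β
      = (n : ℝ)⁻¹ * ∑ i ∈ range n, (y i - z i ⬝ᵥ β) ^ 2 := by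
  simp [meanSqResidual, dotProduct_sampleSecondMoment_mulVec, sub_eq_add_neg]

theorem tendsto_regressionCoef {γ : Type*} {l : Filter γ}
    {G : γ → Matrix (Fin (q + 1)) (Fin (q + 1)) ℝ} {H : Matrix (Fin (q + 1)) (Fin (q + 1)) ℝ}
    (hG : Tendsto G l (𝓝 H)) (hH : IsUnit (H.submatrix Fin.succ Fin.succ).det) :
    Tendsto (fun n => regressionCoef (G n)) l (𝓝 (regressionCoef H)) := by
  have hinv : ContinuousAt Inv.inv (H.submatrix Fin.succ Fin.succ) :=
    continuousAt_matrix_inv _ (by simpa using NormedRing.inverse_continuousAt hH.unit)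
  have hsub := (continuous_id.matrix_submatrix Fin.succ Fin.succ).tendsto H
  have hcol : Continuous fun G : Matrix (Fin (q + 1)) (Fin (q + 1)) ℝ => fun j : Fin q =>
      G 0 j.succ := by
    fun_prop
  exact ((continuous_fst.matrix_mulVec continuous_snd).tendsto _).comp
    (((hinv.tendsto.comp hsub).comp hG).prodMk_nhds ((hcol.tendsto H).comp hG))

theorem Filter.Tendsto.meanSqResidual {γ : Type*} {l : Filter γ}
    {G : γ → Matrix (Fin (q + 1)) (Fin (q + 1)) ℝ} {H : Matrix (Fin (q + 1)) (Fin (q + 1)) ℝ}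
    {β : γ → Fin q → ℝ} {β₀ : Fin q → ℝ} (hG : Tendsto G l (𝓝 H)) (hβ : Tendsto β l (𝓝 β₀)) :
    Tendsto (fun n => meanSqResidual (G n) (β n)) l (𝓝 (meanSqResidual H β₀)) := by
  have hu : Tendsto (fun n => vecCons 1 (-β n)) l (𝓝 (vecCons 1 (-β₀))) :=
    tendsto_const_nhds.matrixVecCons hβ.neg
  exact ((continuous_fst.dotProduct (continuous_snd.matrix_mulVec continuous_fst)).tendsto _).comp
    (hu.prodMk_nhds hG)

theorem tendsto_inv_mul_olsRss {z : ℕ → Fin q → ℝ} {y : ℕ → ℝ}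
    {H : Matrix (Fin (q + 1)) (Fin (q + 1)) ℝ}
    (hH : Tendsto (sampleSecondMoment fun i => vecCons (y i) (z i)) atTop (𝓝 H))
    (hdet : IsUnit (H.submatrix Fin.succ Fin.succ).det) :
    Tendsto (fun n : ℕ => (n : ℝ)⁻¹ * olsRss z y n) atTop
      (𝓝 (meanSqResidual H (regressionCoef H))) := by
  simp_rw [olsRss, ← meanSqResidual_sampleSecondMoment]
  exact hH.meanSqResidual (tendsto_regressionCoef hH hdet)

theorem tendsto_olsRss_div_olsRss {q' : ℕ} {z : ℕ → Fin q → ℝ} {z' : ℕ → Fin q' → ℝ}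
    {y y' : ℕ → ℝ} {H : Matrix (Fin (q + 1)) (Fin (q + 1)) ℝ}
    {H' : Matrix (Fin (q' + 1)) (Fin (q' + 1)) ℝ}
    (hH : Tendsto (sampleSecondMoment fun i => vecCons (y i) (z i)) atTop (𝓝 H))
    (hH' : Tendsto (sampleSecondMoment fun i => vecCons (y' i) (z' i)) atTop (𝓝 H'))
    (hdet : IsUnit (H.submatrix Fin.succ Fin.succ).det)
    (hdet' : IsUnit (H'.submatrix Fin.succ Fin.succ).det)
    (hpos : meanSqResidual H' (regressionCoef H') ≠ 0) :
    Tendsto (fun n => olsRss z y n / olsRss z' y' n) atTop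
      (𝓝 (meanSqResidual H (regressionCoef H) / meanSqResidual H' (regressionCoef H'))) := by
  refine ((tendsto_inv_mul_olsRss hH hdet).div (tendsto_inv_mul_olsRss hH' hdet') hpos).congr' ?_
  filter_upwards [eventually_ne_atTop 0] with n hn
  exact mul_div_mul_left _ _ (inv_ne_zero (Nat.cast_ne_zero.2 hn))

theorem meanSqResidual_pos {H : Matrix (Fin (q + 1)) (Fin (q + 1)) ℝ} (hH : H.PosDef)
    (β : Fin q → ℝ) : 0 < meanSqResidual H β :=
  hH.dotProduct_mulVec_pos fun h => one_ne_zero (congrFun h 0)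

end Regression

section Population

variable {Ω : Type*} [MeasurableSpace Ω] {μ : Measure Ω}

def secondMoment (μ : Measure Ω) (w : Ω → ι → ℝ) : Matrix ι ι ℝ :=
  of fun j k => ∫ ω, w ω j * w ω k ∂μ

theorem ae_tendsto_sampleSecondMoment [Countable ι] {β : Type*} [MeasurableSpace β]
    {Y : ℕ → Ω → β} {f : β → ι → ℝ} (hf : Measurable f) (hindep : iIndepFun Y μ)
    (hident : ∀ i, IdentDistrib (Y i) (Y 0) μ μ)
    (hL2 : ∀ j, MemLp (fun ω => f (Y 0 ω) j) 2 μ) :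
    ∀ᵐ ω ∂μ, Tendsto (sampleSecondMoment fun i => f (Y i ω)) atTop
      (𝓝 (secondMoment μ fun ω => f (Y 0 ω))) := by
  have hentry : ∀ j k, ∀ᵐ ω ∂μ, Tendsto (fun n => sampleSecondMoment (fun i => f (Y i ω)) n j k)
      atTop (𝓝 (secondMoment μ (fun ω => f (Y 0 ω)) j k)) := by
    intro j k
    have hg : Measurable fun b => f b j * f b k :=
      ((measurable_pi_apply j).comp hf).mul ((measurable_pi_apply k).comp hf)
    simpa [sampleSecondMoment, secondMoment, div_eq_inv_mul] using
      strong_law_ae_real (fun i ω => f (Y i ω) j * f (Y i ω) k) ((hL2 j).integrable_mul (hL2 k))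
        (fun i i' h => (hindep.indepFun h).comp hg hg) fun i => (hident i).comp hg
  filter_upwards [ae_all_iff.2 fun j => ae_all_iff.2 (hentry j)] with ω hω
  exact tendsto_pi_nhds.2 fun j => tendsto_pi_nhds.2 (hω j)

variable [Fintype ι] {w : Ω → ι → ℝ}

theorem memLp_dotProduct (hw : ∀ j, MemLp (fun ω => w ω j) 2 μ) (u : ι → ℝ) :
    MemLp (fun ω => w ω ⬝ᵥ u) 2 μ :=
  memLp_finsetSum _ fun j _ => (hw j).mul_const (u j)

theorem secondMoment_mulVec (hw : ∀ j, MemLp (fun ω => w ω j) 2 μ) (u : ι → ℝ) :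
    secondMoment μ w *ᵥ u = fun j => ∫ ω, w ω j * (w ω ⬝ᵥ u) ∂μ := by
  ext j
  simp only [secondMoment, mulVec, dotProduct, of_apply, Finset.mul_sum]
  rw [integral_finsetSum _ fun k _ => ?_]
  · simp only [← mul_assoc, integral_mul_const]
  · exact (hw j).integrable_mul ((hw k).mul_const (u k))

theorem dotProduct_secondMoment_mulVec (hw : ∀ j, MemLp (fun ω => w ω j) 2 μ) (u : ι → ℝ) :
    u ⬝ᵥ secondMoment μ w *ᵥ u = ∫ ω, (w ω ⬝ᵥ u) ^ 2 ∂μ := by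
  have hint : ∀ j, Integrable (fun ω => u j * (w ω j * (w ω ⬝ᵥ u))) μ := fun j =>
    ((hw j).integrable_mul (memLp_dotProduct hw u)).const_mul (u j)
  calc u ⬝ᵥ secondMoment μ w *ᵥ u = ∑ j, ∫ ω, u j * (w ω j * (w ω ⬝ᵥ u)) ∂μ := by
        simp only [secondMoment_mulVec hw, dotProduct, integral_const_mul]
    _ = ∫ ω, (w ω ⬝ᵥ u) ^ 2 ∂μ := by
        rw [← integral_finsetSum _ fun j _ => hint j]
        congr 1 with ω
        rw [sq, dotProduct, Finset.sum_mul]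
        exact Finset.sum_congr rfl fun j _ => by ring

theorem posSemidef_secondMoment (hw : ∀ j, MemLp (fun ω => w ω j) 2 μ) :
    (secondMoment μ w).PosSemidef := by
  refine .of_dotProduct_mulVec_nonneg ?_ fun u => ?_
  · ext j k
    simp [secondMoment, mul_comm]
  · rw [star_trivial, dotProduct_secondMoment_mulVec hw]
    exact integral_nonneg fun ω => sq_nonneg _

theorem meanSqResidual_secondMoment_pos {q : ℕ} {w : Ω → Fin (q + 1) → ℝ}
    (hw : ∀ j, MemLp (fun ω => w ω j) 2 μ) (hdet : IsUnit (secondMoment μ w).det)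
    (β : Fin q → ℝ) : 0 < meanSqResidual (secondMoment μ w) β :=
  meanSqResidual_pos ((posSemidef_secondMoment hw).posDef_iff_isUnit.2
    ((isUnit_iff_isUnit_det _).2 hdet)) β

end Population

section PopulationRegression

variable {Ω : Type*} [MeasurableSpace Ω] {μ : Measure Ω} {q : ℕ} {z : Ω → Fin q → ℝ}

theorem memLp_vecCons {y : Ω → ℝ} (hy : MemLp y 2 μ) (hz : ∀ j, MemLp (fun ω => z ω j) 2 μ) :
    ∀ j, MemLp (fun ω => vecCons (y ω) (z ω) j) 2 μ :=
  Fin.cases hy hz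

theorem regressionCoef_secondMoment (y : Ω → ℝ) (z : Ω → Fin q → ℝ) :
    regressionCoef (secondMoment μ fun ω => vecCons (y ω) (z ω))
      = (secondMoment μ z)⁻¹ *ᵥ fun j => ∫ ω, z ω j * y ω ∂μ := by
  unfold regressionCoef
  congr 1 with j
  exact integral_congr_ae (ae_of_all _ fun ω => mul_comm _ _)

theorem meanSqResidual_secondMoment {y : Ω → ℝ} (hy : MemLp y 2 μ)
    (hz : ∀ j, MemLp (fun ω => z ω j) 2 μ) (β : Fin q → ℝ) :
    meanSqResidual (secondMoment μ fun ω => vecCons (y ω) (z ω)) β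
      = ∫ ω, (y ω - z ω ⬝ᵥ β) ^ 2 ∂μ := by
  simp [meanSqResidual, dotProduct_secondMoment_mulVec (memLp_vecCons hy hz), sub_eq_add_neg]

theorem regressionCoef_secondMoment_of_orthogonal {ε : Ω → ℝ}
    (hz : ∀ j, MemLp (fun ω => z ω j) 2 μ) (hε : MemLp ε 2 μ)
    (horth : ∀ j, ∫ ω, z ω j * ε ω ∂μ = 0) (hdet : IsUnit (secondMoment μ z).det)
    (β : Fin q → ℝ) :
    regressionCoef (secondMoment μ fun ω => vecCons (z ω ⬝ᵥ β + ε ω) (z ω)) = β := by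
  have hcross : (fun j => ∫ ω, z ω j * (z ω ⬝ᵥ β + ε ω) ∂μ) = secondMoment μ z *ᵥ β := by
    rw [secondMoment_mulVec hz]
    ext j
    have h₁ : Integrable (fun ω => z ω j * (z ω ⬝ᵥ β)) μ :=
      (hz j).integrable_mul (memLp_dotProduct hz β)
    have h₂ : Integrable (fun ω => z ω j * ε ω) μ := (hz j).integrable_mul hε
    simp only [mul_add]
    rw [integral_add h₁ h₂, horth j, add_zero]
  rw [regressionCoef_secondMoment, hcross, mulVec_mulVec, nonsing_inv_mul _ hdet, one_mulVec]

theorem meanSqResidual_regressionCoef_of_orthogonal {ε : Ω → ℝ}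
    (hz : ∀ j, MemLp (fun ω => z ω j) 2 μ) (hε : MemLp ε 2 μ)
    (horth : ∀ j, ∫ ω, z ω j * ε ω ∂μ = 0) (hdet : IsUnit (secondMoment μ z).det)
    (β : Fin q → ℝ) :
    meanSqResidual (secondMoment μ fun ω => vecCons (z ω ⬝ᵥ β + ε ω) (z ω))
      (regressionCoef (secondMoment μ fun ω => vecCons (z ω ⬝ᵥ β + ε ω) (z ω)))
      = ∫ ω, ε ω ^ 2 ∂μ := by
  rw [regressionCoef_secondMoment_of_orthogonal hz hε horth hdet,
    meanSqResidual_secondMoment (y := fun ω => _ + ε ω) ((memLp_dotProduct hz β).add hε) hz]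
  simp

end PopulationRegression

end

theorem ols_error_variance_ratio_consistency_general
    (p : ℕ) {Ω : Type*} [MeasurableSpace Ω] (P : Measure Ω)
    (X : ℕ → Ω → Fin p → ℝ) (S e : ℕ → Ω → ℝ)
    (hindep : iIndepFun (fun i ω => (X i ω, S i ω, e i ω)) P)
    (hident : ∀ i, IdentDistrib (fun ω => (X i ω, S i ω, e i ω))
      (fun ω => (X 0 ω, S 0 ω, e 0 ω)) P P)
    (α : ℝ) (a : Fin p → ℝ)
    (M : ℕ → Ω → ℝ) (hM : ∀ i ω, M i ω = α * S i ω + (X i ω ⬝ᵥ a) + e i ω)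
    (horthX : ∀ j, ∫ ω, X 0 ω j * e 0 ω ∂P = 0)
    (horthS : ∫ ω, S 0 ω * e 0 ω ∂P = 0)
    (hL2e : MemLp (e 0) 2 P) (hL2S : MemLp (S 0) 2 P)
    (hL2X : ∀ j, MemLp (fun ω => X 0 ω j) 2 P)
    (GX : Matrix (Fin p) (Fin p) ℝ)
    (hGX : GX = Matrix.of fun j k => ∫ ω, X 0 ω j * X 0 ω k ∂P)
    (hGXinv : IsUnit GX.det)
    -- the Gram matrix of Z̃ = (S, Xᵀ)ᵀ is invertible
    (Zt : Ω → Fin (p + 1) → ℝ)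
    (hZt : ∀ ω, Zt ω = fun j => Fin.cases (S 0 ω) (fun k => X 0 ω k) j)
    (GZ : Matrix (Fin (p + 1)) (Fin (p + 1)) ℝ)
    (hGZ : GZ = Matrix.of fun j k => ∫ ω, Zt ω j * Zt ω k ∂P)
    (hGZinv : IsUnit GZ.det)
    (QS : Fin p → ℝ) (hQS : QS = GX⁻¹ *ᵥ fun j => ∫ ω, X 0 ω j * S 0 ω ∂P)
    (Sperp : Ω → ℝ) (hSperp : ∀ ω, Sperp ω = S 0 ω - X 0 ω ⬝ᵥ QS)
    -- the OLS design matrices, coefficients and residuals from the first n observations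
    (Zn : (n : ℕ) → Ω → Matrix (Fin n) (Fin (p + 1)) ℝ)
    (hZn : ∀ n ω, Zn n ω = Matrix.of fun i j => Fin.cases (S i.1 ω) (fun k => X i.1 ω k) j)
    (θhat : (n : ℕ) → Ω → Fin (p + 1) → ℝ)
    (hθhat : ∀ n ω, θhat n ω =
      ((Zn n ω)ᵀ * Zn n ω)⁻¹ *ᵥ ((Zn n ω)ᵀ *ᵥ fun i : Fin n => M i.1 ω))
    (εhat : (n : ℕ) → Fin n → Ω → ℝ)
    (hεhat : ∀ n (i : Fin n) ω, εhat n i ω = M i.1 ω - (Zn n ω *ᵥ θhat n ω) i)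
    -- the sample-residualized exposure
    (Qhat : ℕ → Ω → Fin p → ℝ)
    (hQhat : ∀ n ω, Qhat n ω =
      ((n : ℝ)⁻¹ • (Matrix.of fun j k => ∑ i ∈ Finset.range n, X i ω j * X i ω k :
          Matrix (Fin p) (Fin p) ℝ))⁻¹
        *ᵥ fun j => (n : ℝ)⁻¹ * ∑ i ∈ Finset.range n, S i ω * X i ω j)
    (Shat : (n : ℕ) → Fin n → Ω → ℝ)
    (hShat : ∀ n (i : Fin n) ω, Shat n i ω = S i.1 ω - X i.1 ω ⬝ᵥ Qhat n ω)
    (σhat2 : ℕ → Ω → ℝ)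
    (hσhat2 : ∀ n ω, σhat2 n ω =
      (∑ i : Fin n, (εhat n i ω) ^ 2) / (∑ i : Fin n, (Shat n i ω) ^ 2)) :
    0 < (∫ ω, (Sperp ω) ^ 2 ∂P) ∧
      ∀ᵐ ω ∂P, Tendsto (fun n => σhat2 n ω) atTop
        (𝓝 ((∫ ω, (e 0 ω) ^ 2 ∂P) / ∫ ω, (Sperp ω) ^ 2 ∂P)) := by
  obtain rfl : GX = secondMoment P (X 0) := hGX
  obtain rfl : Zt = fun ω => vecCons (S 0 ω) (X 0 ω) := funext hZt
  obtain rfl : GZ = secondMoment P (fun ω => vecCons (S 0 ω) (X 0 ω)) := hGZ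
  set Z : ℕ → Ω → Fin (p + 1) → ℝ := fun i ω => vecCons (S i ω) (X i ω)
  have hMZ : ∀ i ω, M i ω = Z i ω ⬝ᵥ vecCons α a + e i ω := fun i ω => by
    simp [hM, Z, mul_comm]
  have hZL2 : ∀ j, MemLp (fun ω => Z 0 ω j) 2 P := memLp_vecCons hL2S hL2X
  have hML2 : MemLp (M 0) 2 P := funext (hMZ 0) ▸ (memLp_dotProduct hZL2 _).add hL2e
  have hnum : ∫ ω, e 0 ω ^ 2 ∂P = meanSqResidual (secondMoment P fun ω => vecCons (M 0 ω) (Z 0 ω))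
      (regressionCoef (secondMoment P fun ω => vecCons (M 0 ω) (Z 0 ω))) := by
    simp only [hMZ 0]
    exact (meanSqResidual_regressionCoef_of_orthogonal hZL2 hL2e (Fin.cases horthS horthX)
      hGZinv _).symm
  have hden : ∫ ω, Sperp ω ^ 2 ∂P
      = meanSqResidual (secondMoment P (Z 0)) (regressionCoef (secondMoment P (Z 0))) := by
    rw [meanSqResidual_secondMoment hL2S hL2X, regressionCoef_secondMoment, ← hQS]
    simp [hSperp]
  rw [hnum, hden]
  refine ⟨meanSqResidual_secondMoment_pos hZL2 hGZinv _, ?_⟩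
  filter_upwards [ae_tendsto_sampleSecondMoment (by fun_prop) hindep hident
      (f := fun v => vecCons (α * v.2.1 + v.1 ⬝ᵥ a + v.2.2) (vecCons v.2.1 v.1))
      (by simpa only [hM] using memLp_vecCons hML2 hZL2),
    ae_tendsto_sampleSecondMoment (f := fun v => vecCons v.2.1 v.1) (by fun_prop) hindep hident
      hZL2] with ω hW hZ
  simp only [← hM] at hW
  refine (tendsto_olsRss_div_olsRss hW hZ hGZinv hGXinv
    (meanSqResidual_secondMoment_pos hZL2 hGZinv _).ne').congr fun n => ?_
  have hε : ∀ i : Fin n, εhat n i ω = M i ω - Z i ω ⬝ᵥ olsCoef (Z · ω) (M · ω) n := fun i => by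
    rw [hεhat, hθhat, hZn, ← normalEquations_solution_eq_olsCoef _ _ i.pos.ne']
    rfl
  have hŜ : ∀ i : Fin n, Shat n i ω = S i ω - X i ω ⬝ᵥ olsCoef (X · ω) (S · ω) n := fun i => by
    rw [hShat, hQhat]
    rfl
  simp only [olsRss, sum_range, hσhat2, hε, hŜ]
  rfl

/-- Almost-sure consistency of the OLS error-variance ratio (Lemma S.3, first part):
`σ̂²ₙ = (Σᵢ ε̂²_{n,i}) / (Σᵢ Ŝ²_{⊥,n,i}) → E[e²]/E[S_⊥²]` almost surely. -/
theorem ols_error_variance_ratio_consistency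
    (p : ℕ) {Ω : Type*} [MeasurableSpace Ω] (P : Measure Ω) [IsProbabilityMeasure P]
    (X : ℕ → Ω → Fin p → ℝ) (S e : ℕ → Ω → ℝ)
    (hmeas : ∀ i, Measurable fun ω => (X i ω, S i ω, e i ω))
    (hindep : iIndepFun (fun i ω => (X i ω, S i ω, e i ω)) P)
    (hident : ∀ i, IdentDistrib (fun ω => (X i ω, S i ω, e i ω))
      (fun ω => (X 0 ω, S 0 ω, e 0 ω)) P P)
    (α : ℝ) (a : Fin p → ℝ)
    (M : ℕ → Ω → ℝ) (hM : ∀ i ω, M i ω = α * S i ω + (X i ω ⬝ᵥ a) + e i ω)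
    (horthX : ∀ j, ∫ ω, X 0 ω j * e 0 ω ∂P = 0)
    (horthS : ∫ ω, S 0 ω * e 0 ω ∂P = 0)
    (hL2e : MemLp (e 0) 2 P) (hL2S : MemLp (S 0) 2 P)
    (hL2X : ∀ j, MemLp (fun ω => X 0 ω j) 2 P)
    (GX : Matrix (Fin p) (Fin p) ℝ)
    (hGX : GX = Matrix.of fun j k => ∫ ω, X 0 ω j * X 0 ω k ∂P)
    (hGXinv : IsUnit GX.det)
    -- the Gram matrix of Z̃ = (S, Xᵀ)ᵀ is invertible
    (Zt : Ω → Fin (p + 1) → ℝ)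
    (hZt : ∀ ω, Zt ω = fun j => Fin.cases (S 0 ω) (fun k => X 0 ω k) j)
    (GZ : Matrix (Fin (p + 1)) (Fin (p + 1)) ℝ)
    (hGZ : GZ = Matrix.of fun j k => ∫ ω, Zt ω j * Zt ω k ∂P)
    (hGZinv : IsUnit GZ.det)
    (QS : Fin p → ℝ) (hQS : QS = GX⁻¹ *ᵥ fun j => ∫ ω, X 0 ω j * S 0 ω ∂P)
    (Sperp : Ω → ℝ) (hSperp : ∀ ω, Sperp ω = S 0 ω - X 0 ω ⬝ᵥ QS)
    -- the OLS design matrices, coefficients and residuals from the first n observations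
    (Zn : (n : ℕ) → Ω → Matrix (Fin n) (Fin (p + 1)) ℝ)
    (hZn : ∀ n ω, Zn n ω = Matrix.of fun i j => Fin.cases (S i.1 ω) (fun k => X i.1 ω k) j)
    (θhat : (n : ℕ) → Ω → Fin (p + 1) → ℝ)
    (hθhat : ∀ n ω, θhat n ω =
      ((Zn n ω)ᵀ * Zn n ω)⁻¹ *ᵥ ((Zn n ω)ᵀ *ᵥ fun i : Fin n => M i.1 ω))
    (εhat : (n : ℕ) → Fin n → Ω → ℝ)
    (hεhat : ∀ n (i : Fin n) ω, εhat n i ω = M i.1 ω - (Zn n ω *ᵥ θhat n ω) i)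
    -- the sample-residualized exposure
    (Qhat : ℕ → Ω → Fin p → ℝ)
    (hQhat : ∀ n ω, Qhat n ω =
      ((n : ℝ)⁻¹ • (Matrix.of fun j k => ∑ i ∈ Finset.range n, X i ω j * X i ω k :
          Matrix (Fin p) (Fin p) ℝ))⁻¹
        *ᵥ fun j => (n : ℝ)⁻¹ * ∑ i ∈ Finset.range n, S i ω * X i ω j)
    (Shat : (n : ℕ) → Fin n → Ω → ℝ)
    (hShat : ∀ n (i : Fin n) ω, Shat n i ω = S i.1 ω - X i.1 ω ⬝ᵥ Qhat n ω)
    (σhat2 : ℕ → Ω → ℝ)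
    (hσhat2 : ∀ n ω, σhat2 n ω =
      (∑ i : Fin n, (εhat n i ω) ^ 2) / (∑ i : Fin n, (Shat n i ω) ^ 2)) :
    0 < (∫ ω, (Sperp ω) ^ 2 ∂P) ∧
      ∀ᵐ ω ∂P, Tendsto (fun n => σhat2 n ω) atTop
        (𝓝 ((∫ ω, (e 0 ω) ^ 2 ∂P) / ∫ ω, (Sperp ω) ^ 2 ∂P)) :=
  ols_error_variance_ratio_consistency_general p P X S e hindep hident α a M hM horthX horthS hL2e
    hL2S hL2X GX hGX hGXinv Zt hZt GZ hGZ hGZinv QS hQS Sperp hSperp Zn hZn θhat hθhat εhat hεhat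
    Qhat hQhat Shat hShat σhat2 hσhat2
end
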